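/- Let G = (V,E) be a graph with S ⊆ V, C a connected component of G \ S, B = C ∪ S, and let Ḡ_B be the closure of G_B (adding edges between vertices of S joined by a path lying outside B). Suppose S' ⊆ B separates subsets C₁ and C₂ of B in Ḡ_B. Then S' separates C₁ and C₂ in G. -/

import Mathlib

open scoped Classical

/-- The set of connected components of `G` with the vertices of `S` removed,
viewed as subsets of the ambient vertex set. -/
def compsOf {V : Type*} (G : SimpleGraph V) (S : Set V) : Set (Set V) :=
  {C | ∃ c : (G.induce Sᶜ).ConnectedComponent,
    C = Subtype.val '' {u : ↥Sᶜ | (G.induce Sᶜ).connectedComponentMk u = c}}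

/-- The closure `Ḡ_B` of the induced subgraph `G_B`: the induced subgraph on `B`
together with an edge between any two non-adjacent `i, j ∈ S` that are joined in
`G` by a path whose interior vertices all lie outside `B`. -/
def closureGraph {V : Type*} (G : SimpleGraph V) (B S : Set V) : SimpleGraph ↥B where
  Adj u v := (G.induce B).Adj u v ∨
    (u ≠ v ∧ (u : V) ∈ S ∧ (v : V) ∈ S ∧ ¬ G.Adj (u : V) (v : V) ∧
      ∃ p : G.Walk (u : V) (v : V),
        ∀ x ∈ p.support, x = (u : V) ∨ x = (v : V) ∨ x ∉ B)
  symm := by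
    constructor
    rintro u v (h | ⟨hne, hu, hv, hna, p, hp⟩)
    · exact Or.inl h.symm
    · refine Or.inr ⟨hne.symm, hv, hu, fun h => hna h.symm, p.reverse, ?_⟩
      intro x hx
      rw [SimpleGraph.Walk.support_reverse, List.mem_reverse] at hx
      rcases hp x hx with h | h | h
      · exact Or.inr (Or.inl h)
      · exact Or.inl h
      · exact Or.inr (Or.inr h)
  loopless := by
    constructor
    rintro u (h | ⟨hne, _⟩)
    · exact (G.induce B).loopless.irrefl u h
    · exact hne rfl


/-- If `S' ⊆ B` separates subsets `C₁` and `C₂` of `B` in the closure `Ḡ_B`,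
then `S'` separates `C₁` and `C₂` in `G`. -/
theorem stmt7 {V : Type*} (G : SimpleGraph V) (S C B : Set V)
    (hC : C ∈ compsOf G S) (hB : B = C ∪ S)
    (C₁ C₂ : Set V) (hC₁ : C₁ ⊆ B) (hC₂ : C₂ ⊆ B)
    (S' : Set V) (hS'B : S' ⊆ B)
    (hsep : ∀ (x y : ↥B), (x : V) ∈ C₁ → (y : V) ∈ C₂ →
      ∀ p : (closureGraph G B S).Walk x y, ∃ s ∈ p.support, (s : V) ∈ S') :
    ∀ x ∈ C₁, ∀ y ∈ C₂, ∀ q : G.Walk x y, ∃ s ∈ q.support, s ∈ S' := by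

  intro x hx y hy q
  have hSB : S ⊆ B := hB ▸ Set.subset_union_right
  -- any vertex of B adjacent to a vertex outside B lies in S
  have exitS : ∀ {a b : V}, a ∈ B → b ∉ B → G.Adj a b → a ∈ S := by
    intro a b ha hb hab
    by_contra haS
    obtain ⟨c, hc⟩ := hC
    have haC : a ∈ C := by
      rcases hB ▸ ha with h | h
      · exact h
      · exact absurd h haS
    have hbS : b ∉ S := fun hbS => hb (hSB hbS)
    rw [hc] at haC
    obtain ⟨ua, hua, huaa⟩ := haC
    have hadj : (G.induce Sᶜ).Adj ua ⟨b, hbS⟩ := by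
      simpa [huaa] using hab
    have hbC : b ∈ C := by
      rw [hc]
      refine ⟨⟨b, hbS⟩, ?_, rfl⟩
      have : (G.induce Sᶜ).connectedComponentMk ⟨b, hbS⟩
          = (G.induce Sᶜ).connectedComponentMk ua :=
        SimpleGraph.ConnectedComponent.sound hadj.symm.reachable
      simpa [this] using hua
    exact hb (hB ▸ Or.inl hbC)
  have key : ∀ {z y : V} (q : G.Walk z y) (hy : y ∈ B),
      (∀ hz : z ∈ B, ∃ p : (closureGraph G B S).Walk ⟨z, hz⟩ ⟨y, hy⟩,
        ∀ s ∈ p.support, (s : V) ∈ q.support) ∧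
      (z ∉ B → ∀ u, ∀ hu : u ∈ S, ∀ r : G.Walk u z,
        (∀ x ∈ r.support, x = u ∨ x ∉ B) →
        ∃ p : (closureGraph G B S).Walk ⟨u, hSB hu⟩ ⟨y, hy⟩,
          ∀ s ∈ p.support, (s : V) = u ∨ (s : V) ∈ q.support) := by
    intro z y q
    induction q with
    | nil =>
      intro hy
      constructor
      · intro hz
        exact ⟨SimpleGraph.Walk.nil, by simp⟩
      · intro hz
        exact absurd hy hz
    | @cons z w y h q ih =>
      intro hy
      constructor
      · intro hz
        by_cases hw : w ∈ B
        · obtain ⟨p, hp⟩ := (ih hy).1 hw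
          have hadj : (closureGraph G B S).Adj ⟨z, hz⟩ ⟨w, hw⟩ :=
            Or.inl (by simpa using h)
          refine ⟨SimpleGraph.Walk.cons hadj p, ?_⟩
          intro s hs
          rw [SimpleGraph.Walk.support_cons, List.mem_cons] at hs
          rcases hs with hs | hs
          · subst hs; simp
          · exact List.mem_cons_of_mem _ (hp s hs)
        · have hzS : z ∈ S := exitS hz hw h
          obtain ⟨p, hp⟩ := (ih hy).2 hw z hzS (SimpleGraph.Walk.cons h SimpleGraph.Walk.nil)
            (by
              intro x hx
              simp only [SimpleGraph.Walk.support_cons, SimpleGraph.Walk.support_nil,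
                List.mem_cons, List.mem_singleton] at hx
              rcases hx with rfl | rfl | h'
              · exact Or.inl rfl
              · exact Or.inr hw
              · exact absurd h' (by simp))
          refine ⟨p, ?_⟩
          intro s hs
          rcases hp s hs with hs' | hs'
          · rw [hs']; simp
          · exact List.mem_cons_of_mem _ hs'
      · intro hz u hu r hr
        by_cases hw : w ∈ B
        · have hwS : w ∈ S := exitS hw hz h.symm
          obtain ⟨p, hp⟩ := (ih hy).1 hw
          by_cases huw : u = w
          · subst huw
            refine ⟨p, ?_⟩
            intro s hs
            exact Or.inr (List.mem_cons_of_mem _ (hp s hs))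
          · have hadj : (closureGraph G B S).Adj ⟨u, hSB hu⟩ ⟨w, hw⟩ := by
              by_cases hga : G.Adj u w
              · exact Or.inl (by simpa using hga)
              · refine Or.inr ⟨fun he => huw (congrArg Subtype.val he), hu, hwS, hga,
                  r.append (SimpleGraph.Walk.cons h SimpleGraph.Walk.nil), ?_⟩
                intro x hx
                rw [SimpleGraph.Walk.mem_support_append_iff] at hx
                rcases hx with hx | hx
                · rcases hr x hx with hx' | hx'
                  · exact Or.inl hx'
                  · exact Or.inr (Or.inr hx')
                · simp only [SimpleGraph.Walk.support_cons, SimpleGraph.Walk.support_nil,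
                    List.mem_cons, List.mem_singleton] at hx
                  rcases hx with rfl | rfl | h'
                  · exact Or.inr (Or.inr hz)
                  · exact Or.inr (Or.inl rfl)
                  · exact absurd h' (by simp)
            refine ⟨SimpleGraph.Walk.cons hadj p, ?_⟩
            intro s hs
            rw [SimpleGraph.Walk.support_cons, List.mem_cons] at hs
            rcases hs with hs | hs
            · subst hs; exact Or.inl rfl
            · exact Or.inr (List.mem_cons_of_mem _ (hp s hs))
        · obtain ⟨p, hp⟩ := (ih hy).2 hw u hu
            (r.append (SimpleGraph.Walk.cons h SimpleGraph.Walk.nil))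
            (by
              intro x hx
              rw [SimpleGraph.Walk.mem_support_append_iff] at hx
              rcases hx with hx | hx
              · exact hr x hx
              · simp only [SimpleGraph.Walk.support_cons, SimpleGraph.Walk.support_nil,
                  List.mem_cons, List.mem_singleton] at hx
                rcases hx with rfl | rfl | h'
                · exact Or.inr hz
                · exact Or.inr hw
                · exact absurd h' (by simp))
          refine ⟨p, ?_⟩
          intro s hs
          rcases hp s hs with hs' | hs'
          · exact Or.inl hs'
          · exact Or.inr (List.mem_cons_of_mem _ hs')
  have hxB : x ∈ B := hC₁ hx
  have hyB : y ∈ B := hC₂ hy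
  obtain ⟨p, hp⟩ := (key q hyB).1 hxB
  obtain ⟨s, hs, hsS'⟩ := hsep ⟨x, hxB⟩ ⟨y, hyB⟩ hx hy p
  exact ⟨s, hp s hs, hsS'⟩
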